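/- Let R be a nonzero commutative ring with identity and let n ≥ 2. Then the girth of APOḠ(M_n(R)) equals 3; i.e., APOḠ(M_n(R)) contains a triangle and a triangle is a shortest cycle. -/

import Mathlib

open scoped Pointwise

/-- `I` is a left ideal of the ring `R`: an additive subgroup with `R·I ⊆ I`. -/
def IsLeftIdeal (R : Type*) [Ring R] (I : AddSubgroup R) : Prop :=
  ∀ r : R, ∀ x ∈ I, r * x ∈ I

/-- `I` is a right ideal of the ring `R`: an additive subgroup with `I·R ⊆ I`. -/
def IsRightIdeal (R : Type*) [Ring R] (I : AddSubgroup R) : Prop :=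
  ∀ r : R, ∀ x ∈ I, x * r ∈ I

/-- `I` is a one-sided (left or right) ideal of `R`. -/
def IsOneSidedIdeal (R : Type*) [Ring R] (I : AddSubgroup R) : Prop :=
  IsLeftIdeal R I ∨ IsRightIdeal R I

/-- `IPO(R)`: the set of all products `I*J` of two one-sided ideals of `R`.
Here `I * J` is the additive subgroup generated by `{a*b : a ∈ I, b ∈ J}`
(the pointwise product of additive subgroups). -/
def IPO (R : Type*) [Ring R] : Set (AddSubgroup R) :=
  {A | ∃ I J : AddSubgroup R, IsOneSidedIdeal R I ∧ IsOneSidedIdeal R J ∧ A = I * J}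

/-- `A` is a vertex of `APOG(R) = Γ(IPO(R))`: a nonzero element of `IPO(R)` that is a
one-sided zero-divisor of the semigroup `IPO(R)`. -/
def APOGVertex (R : Type*) [Ring R] (A : AddSubgroup R) : Prop :=
  A ∈ IPO R ∧ A ≠ ⊥ ∧ ∃ B ∈ IPO R, B ≠ ⊥ ∧ (A * B = ⊥ ∨ B * A = ⊥)

/-- The directed edge `A → B` of `APOG(R)`: both are vertices, `A ≠ B` and `A*B = 0`. -/
def APOGEdge (R : Type*) [Ring R] (A B : AddSubgroup R) : Prop :=
  APOGVertex R A ∧ APOGVertex R B ∧ A ≠ B ∧ A * B = ⊥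

/-- The undirected graph `APOḠ(R) = Γ̄(IPO(R))` on the vertex set of `APOG(R)`:
distinct vertices `A, B` are adjacent iff `A*B = 0` or `B*A = 0`. -/
def apogGraph (R : Type*) [Ring R] : SimpleGraph {A : AddSubgroup R // APOGVertex R A} where
  Adj A B := A ≠ B ∧ ((A : AddSubgroup R) * B = ⊥ ∨ (B : AddSubgroup R) * A = ⊥)
  symm := by constructor; rintro A B ⟨hAB, h⟩; exact ⟨hAB.symm, h.symm⟩
  loopless := by constructor; rintro A ⟨h, -⟩; exact h rfl

/-! If `e, f` are idempotents of a ring `T` with `e f = f e = 0` and `e T f ≠ 0`, the corners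
`eTe`, `eTf`, `fTf` are nonzero members of `IPO(T)` (each corner `eTf` is the product `(eT)(Tf)`
of a right and a left ideal), and `(eTe)(fTf) = (eTf)(eTe) = (fTf)(eTf) = 0` because every such
product passes through `f e` or `e f`. So they form a triangle, while every cycle of a simple
graph has length at least three. In `Mₙ(R)` take the matrix units `e = E₀₀`, `f = E₁₁`. -/

namespace SimpleGraph

lemma girth_eq_three_of_adj {α : Type*} {G : SimpleGraph α} {a b c : α}
    (hab : G.Adj a b) (hac : G.Adj a c) (hbc : G.Adj b c) : G.girth = 3 := by
  classical
  obtain ⟨u, w, hw, hlen⟩ :=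
    is3Clique_iff_exists_cycle_length_three.mp ⟨_, is3Clique_triple_iff.2 ⟨hab, hac, hbc⟩⟩
  exact le_antisymm (hlen ▸ girth_le_length hw) (three_le_girth fun h => h w hw)

end SimpleGraph

namespace AddSubgroup

variable {T : Type*} [Ring T]

lemma mul_le {A B C : AddSubgroup T} : A * B ≤ C ↔ ∀ a ∈ A, ∀ b ∈ B, a * b ∈ C :=
  AddSubmonoid.mul_le

lemma mul_mem_mul {A B : AddSubgroup T} {a b : T} (ha : a ∈ A) (hb : b ∈ B) : a * b ∈ A * B :=
  AddSubmonoid.mul_mem_mul ha hb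

end AddSubgroup

section Corner

variable {T : Type*} [Ring T]

def cornerSubgroup (e f : T) : AddSubgroup T :=
  ((AddMonoidHom.mulRight f).comp (AddMonoidHom.mulLeft e)).range

@[simp]
lemma mem_cornerSubgroup {e f x : T} : x ∈ cornerSubgroup e f ↔ ∃ y, e * y * f = x := by
  simp [cornerSubgroup]

lemma isRightIdeal_mulLeft_range (e : T) : IsRightIdeal T (AddMonoidHom.mulLeft e).range := by
  rintro r _ ⟨y, rfl⟩
  exact ⟨y * r, by simp [mul_assoc]⟩

lemma isLeftIdeal_mulRight_range (f : T) : IsLeftIdeal T (AddMonoidHom.mulRight f).range := by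
  rintro r _ ⟨y, rfl⟩
  exact ⟨r * y, by simp [mul_assoc]⟩

lemma mulLeft_range_mul_mulRight_range (e f : T) :
    (AddMonoidHom.mulLeft e).range * (AddMonoidHom.mulRight f).range = cornerSubgroup e f := by
  apply le_antisymm
  · rw [AddSubgroup.mul_le]
    rintro _ ⟨a, rfl⟩ _ ⟨b, rfl⟩
    exact mem_cornerSubgroup.2 ⟨a * b, by simp [mul_assoc]⟩
  · rintro _ ⟨y, rfl⟩
    exact AddSubgroup.mul_mem_mul ⟨y, rfl⟩ ⟨1, one_mul f⟩

lemma cornerSubgroup_mem_IPO (e f : T) : cornerSubgroup e f ∈ IPO T :=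
  ⟨_, _, .inr (isRightIdeal_mulLeft_range e), .inl (isLeftIdeal_mulRight_range f),
    (mulLeft_range_mul_mulRight_range e f).symm⟩

lemma cornerSubgroup_mul_eq_bot (e : T) {f g : T} (h : T) (hfg : f * g = 0) :
    cornerSubgroup e f * cornerSubgroup g h = ⊥ := by
  rw [eq_bot_iff, AddSubgroup.mul_le]
  rintro _ ⟨a, rfl⟩ _ ⟨b, rfl⟩
  simp [mul_assoc, ← mul_assoc f, hfg]

lemma cornerSubgroup_ne_bot {e f : T} (x : T) (hx : e * x * f ≠ 0) : cornerSubgroup e f ≠ ⊥ :=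
  fun h => hx <| (AddSubgroup.mem_bot).1 (h ▸ mem_cornerSubgroup.2 ⟨x, rfl⟩)

lemma cornerSubgroup_mul_self_ne_bot {e : T} (he : IsIdempotentElem e) (he0 : e ≠ 0) :
    cornerSubgroup e e * cornerSubgroup e e ≠ ⊥ := by
  have hmem : e ∈ cornerSubgroup e e := mem_cornerSubgroup.2 ⟨1, by rw [mul_one, he.eq]⟩
  intro h
  exact he0 <| he.eq ▸ (AddSubgroup.mem_bot).1 (h ▸ AddSubgroup.mul_mem_mul hmem hmem)

end Corner

section Graph

variable {T : Type*} [Ring T]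

lemma apogVertex_of_mul_eq_bot {A B : AddSubgroup T} (hA : A ∈ IPO T) (hB : B ∈ IPO T)
    (hA0 : A ≠ ⊥) (hB0 : B ≠ ⊥) (h : A * B = ⊥) : APOGVertex T A ∧ APOGVertex T B :=
  ⟨⟨hA, hA0, B, hB, hB0, .inl h⟩, ⟨hB, hB0, A, hA, hA0, .inr h⟩⟩

lemma apogGraph_adj_of_mul_eq_bot {A B : {A : AddSubgroup T // APOGVertex T A}}
    (h : (A : AddSubgroup T) * B = ⊥)
    (hsq : (A : AddSubgroup T) * A ≠ ⊥ ∨ (B : AddSubgroup T) * B ≠ ⊥) :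
    (apogGraph T).Adj A B := by
  refine ⟨?_, .inl h⟩
  rintro rfl
  exact hsq.elim (· h) (· h)

theorem apogGraph_girth_eq_three_of_orthogonal {e f x : T} (he : IsIdempotentElem e)
    (hf : IsIdempotentElem f) (hef : e * f = 0) (hfe : f * e = 0) (hx : e * x * f ≠ 0) :
    (apogGraph T).girth = 3 := by
  have he0 : e ≠ 0 := by rintro rfl; simp at hx
  have hf0 : f ≠ 0 := by rintro rfl; simp at hx
  have hA0 : cornerSubgroup e e ≠ ⊥ := cornerSubgroup_ne_bot 1 (by rwa [mul_one, he.eq])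
  have hB0 : cornerSubgroup e f ≠ ⊥ := cornerSubgroup_ne_bot x hx
  have hC0 : cornerSubgroup f f ≠ ⊥ := cornerSubgroup_ne_bot 1 (by rwa [mul_one, hf.eq])
  have hAC := cornerSubgroup_mul_eq_bot e f hef
  have hBA := cornerSubgroup_mul_eq_bot e e hfe
  have hCB := cornerSubgroup_mul_eq_bot f f hfe
  have hIPO := cornerSubgroup_mem_IPO (T := T)
  have hA := cornerSubgroup_mul_self_ne_bot he he0
  have hC := cornerSubgroup_mul_self_ne_bot hf hf0
  let A : {A // APOGVertex T A} :=
    ⟨cornerSubgroup e e, (apogVertex_of_mul_eq_bot (hIPO e e) (hIPO f f) hA0 hC0 hAC).1⟩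
  let B : {A // APOGVertex T A} :=
    ⟨cornerSubgroup e f, (apogVertex_of_mul_eq_bot (hIPO e f) (hIPO e e) hB0 hA0 hBA).1⟩
  let C : {A // APOGVertex T A} :=
    ⟨cornerSubgroup f f, (apogVertex_of_mul_eq_bot (hIPO f f) (hIPO e f) hC0 hB0 hCB).1⟩
  exact SimpleGraph.girth_eq_three_of_adj (a := A) (b := B) (c := C)
    (apogGraph_adj_of_mul_eq_bot (A := B) (B := A) hBA (.inr hA)).symm
    (apogGraph_adj_of_mul_eq_bot (A := A) (B := C) hAC (.inl hA))
    (apogGraph_adj_of_mul_eq_bot (A := C) (B := B) hCB (.inl hC)).symm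

end Graph

/-- For a nonzero commutative ring `R` and `n ≥ 2`, the girth of
`APOḠ(Mₙ(R))` equals `3`. -/
theorem matrix_apog_girth_eq_three (R : Type*) [CommRing R] [Nontrivial R]
    (n : ℕ) (hn : 2 ≤ n) :
    (apogGraph (Matrix (Fin n) (Fin n) R)).girth = 3 := by
  let i : Fin n := ⟨0, by omega⟩
  let j : Fin n := ⟨1, by omega⟩
  have hij : i ≠ j := by simp [i, j, Fin.ext_iff]
  refine apogGraph_girth_eq_three_of_orthogonal (e := Matrix.single i i 1)
    (f := Matrix.single j j 1) (x := Matrix.single i j 1) ?_ ?_ ?_ ?_ ?_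
  · simp [IsIdempotentElem]
  · simp [IsIdempotentElem]
  · simp [hij]
  · simp [hij.symm]
  · exact fun h => (one_ne_zero : (1 : R) ≠ 0) (by simpa using congrFun (congrFun h i) j)
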